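/- arXiv:2206.09370 — 2 statements merged into one kernel-verified Lean document; each statement's English description precedes it below -/
import Mathlib

section
/- Let Q ≻ 0 be a real symmetric p×p matrix, x₁,…,xₙ nonzero vectors in ℝ^p not all contained in a subspace of dimension p-1 (i.e., spanning ℝ^p), v ∈ ℝ^p nonzero, and let G = -(p/n)Σᵢ(Q⁻¹xᵢxᵢᵀQ⁻¹)/(xᵢᵀQ⁻¹xᵢ) + Q⁻¹. Then 1 - (vᵀGv)/(vᵀQ⁻¹v) = (1/(vᵀQ⁻¹v))·(p/n)Σᵢ(vᵀQ⁻¹xᵢ)²/(xᵢᵀQ⁻¹xᵢ) > 0. -/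
open Matrix

lemma aux_sum_mulVec {p n : ℕ} (M : Fin n → Matrix (Fin p) (Fin p) ℝ) (v : Fin p → ℝ) :
    (∑ i, M i) *ᵥ v = ∑ i, (M i) *ᵥ v := by
  ext k
  simp only [mulVec, dotProduct, Finset.sum_apply, Matrix.sum_apply, Finset.sum_mul]
  rw [Finset.sum_comm]

lemma aux_dotProduct_sum {p n : ℕ} (v : Fin p → ℝ) (f : Fin n → Fin p → ℝ) :
    v ⬝ᵥ (∑ i, f i) = ∑ i, v ⬝ᵥ f i := by
  simp only [dotProduct, Finset.sum_apply, Finset.mul_sum]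
  rw [Finset.sum_comm]

lemma aux_dot_vecMulVec {p : ℕ} (w v : Fin p → ℝ) :
    v ⬝ᵥ ((vecMulVec w w) *ᵥ v) = (v ⬝ᵥ w) ^ 2 := by
  simp only [dotProduct, mulVec, vecMulVec_apply, sq, Finset.mul_sum, Finset.sum_mul]
  rw [Finset.sum_comm]
  apply Finset.sum_congr rfl
  intro i _
  apply Finset.sum_congr rfl
  intro j _
  ring

lemma aux_alg (b c S : ℝ) (hb : b ≠ 0) : 1 - (-c * S + b) / b = b⁻¹ * (c * S) := by
  field_simp
  ring

theorem grad_rayleigh_identity_pos {p n : ℕ}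
    (Q : Matrix (Fin p) (Fin p) ℝ) (hQ : Q.PosDef)
    (x : Fin n → Fin p → ℝ) (hx : ∀ i, x i ≠ 0)
    (hspan : Submodule.span ℝ (Set.range x) = ⊤)
    (v : Fin p → ℝ) (hv : v ≠ 0)
    (G : Matrix (Fin p) (Fin p) ℝ)
    (hG : G = -(((p : ℝ) / n) • ∑ i, (x i ⬝ᵥ (Q⁻¹ *ᵥ x i))⁻¹ •
        vecMulVec (Q⁻¹ *ᵥ x i) (Q⁻¹ *ᵥ x i)) + Q⁻¹) :
    1 - (v ⬝ᵥ (G *ᵥ v)) / (v ⬝ᵥ (Q⁻¹ *ᵥ v)) =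
        (v ⬝ᵥ (Q⁻¹ *ᵥ v))⁻¹ *
          (((p : ℝ) / n) * ∑ i, (v ⬝ᵥ (Q⁻¹ *ᵥ x i)) ^ 2 / (x i ⬝ᵥ (Q⁻¹ *ᵥ x i))) ∧
      0 < 1 - (v ⬝ᵥ (G *ᵥ v)) / (v ⬝ᵥ (Q⁻¹ *ᵥ v)) := by
  have hQi : (Q⁻¹).PosDef := hQ.inv
  have hvQ : 0 < v ⬝ᵥ (Q⁻¹ *ᵥ v) := by simpa using hQi.dotProduct_mulVec_pos hv
  have hxQ : ∀ i, 0 < x i ⬝ᵥ (Q⁻¹ *ᵥ x i) := fun i => by simpa using hQi.dotProduct_mulVec_pos (hx i)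
  have key : v ⬝ᵥ (G *ᵥ v) =
      -((p : ℝ) / n) * (∑ i, (v ⬝ᵥ (Q⁻¹ *ᵥ x i)) ^ 2 / (x i ⬝ᵥ (Q⁻¹ *ᵥ x i)))
        + v ⬝ᵥ (Q⁻¹ *ᵥ v) := by
    subst hG
    rw [add_mulVec, neg_mulVec, smul_mulVec, aux_sum_mulVec, dotProduct_add,
      dotProduct_neg, dotProduct_smul, aux_dotProduct_sum]
    have h1 : ∀ i : Fin n,
        v ⬝ᵥ (((x i ⬝ᵥ (Q⁻¹ *ᵥ x i))⁻¹ • vecMulVec (Q⁻¹ *ᵥ x i) (Q⁻¹ *ᵥ x i)) *ᵥ v)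
        = (v ⬝ᵥ (Q⁻¹ *ᵥ x i)) ^ 2 / (x i ⬝ᵥ (Q⁻¹ *ᵥ x i)) := by
      intro i
      rw [smul_mulVec, dotProduct_smul, aux_dot_vecMulVec, smul_eq_mul]
      field_simp
    rw [Finset.sum_congr rfl fun i _ => h1 i, smul_eq_mul]
    ring
  have heq : 1 - (v ⬝ᵥ (G *ᵥ v)) / (v ⬝ᵥ (Q⁻¹ *ᵥ v)) =
      (v ⬝ᵥ (Q⁻¹ *ᵥ v))⁻¹ *
        (((p : ℝ) / n) * ∑ i, (v ⬝ᵥ (Q⁻¹ *ᵥ x i)) ^ 2 / (x i ⬝ᵥ (Q⁻¹ *ᵥ x i))) := by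
    rw [key]; exact aux_alg _ _ _ hvQ.ne'
  refine ⟨heq, ?_⟩
  rw [heq]
  have hp : 0 < p := by
    rcases Nat.eq_zero_or_pos p with h | h
    · subst h; exact absurd (funext fun i => i.elim0) hv
    · exact h
  have hn : 0 < n := by
    rcases Nat.eq_zero_or_pos n with h | h
    · subst h
      rw [Set.range_eq_empty, Submodule.span_empty] at hspan
      have hvmem : v ∈ (⊥ : Submodule ℝ (Fin p → ℝ)) := hspan ▸ Submodule.mem_top
      exact absurd (Submodule.mem_bot ℝ |>.mp hvmem) hv
    · exact h
  have hsumpos : 0 < ∑ i, (v ⬝ᵥ (Q⁻¹ *ᵥ x i)) ^ 2 / (x i ⬝ᵥ (Q⁻¹ *ᵥ x i)) := by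
    have hw : Q⁻¹ *ᵥ v ≠ 0 := by
      intro h
      rw [h, dotProduct_zero] at hvQ
      exact lt_irrefl 0 hvQ
    have hsym : (Q⁻¹)ᵀ = Q⁻¹ := by
      have h := hQi.1
      rw [Matrix.IsHermitian, conjTranspose] at h
      ext i j; have := congrFun (congrFun h i) j; simpa using this
    have hex : ∃ i, v ⬝ᵥ (Q⁻¹ *ᵥ x i) ≠ 0 := by
      by_contra hall
      push_neg at hall
      have horth : ∀ u : Fin p → ℝ, u ∈ Submodule.span ℝ (Set.range x) →
          (Q⁻¹ *ᵥ v) ⬝ᵥ u = 0 := by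
        intro u hu
        induction hu using Submodule.span_induction with
        | mem u hu =>
          obtain ⟨i, rfl⟩ := hu
          rw [← Matrix.vecMul_transpose, hsym, ← dotProduct_mulVec]
          exact hall i
        | zero => simp
        | add a b _ _ ha hb => simp [dotProduct_add, ha, hb]
        | smul c a _ ha => simp [dotProduct_smul, ha]
      have h0 : (Q⁻¹ *ᵥ v) ⬝ᵥ (Q⁻¹ *ᵥ v) = 0 :=
        horth (Q⁻¹ *ᵥ v) (hspan ▸ Submodule.mem_top)
      exact hw (dotProduct_self_eq_zero.mp h0)
    obtain ⟨i, hi⟩ := hex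
    refine Finset.sum_pos' (fun j _ => div_nonneg (sq_nonneg _) (hxQ j).le) ⟨i, Finset.mem_univ i, ?_⟩
    have := hxQ i
    positivity
  have hpn : (0:ℝ) < (p : ℝ) / n := by positivity
  positivity
end

section
/- Let x₁,…,xₙ be unit vectors in ℝ^p with n ≥ 2p such that every subset S of {x₁,…,xₙ} with |S| ≥ n/2 spans ℝ^p. Then there exists α > 0 such that for all unit vectors u, v ∈ ℝ^p, (1/n)Σᵢ(uᵀxᵢ)²(vᵀxᵢ)² ≥ α. -/
open Matrix

theorem quartic_form_uniform_lower_bound {p n : ℕ}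
    (x : Fin n → Fin p → ℝ) (hx : ∀ i, x i ⬝ᵥ x i = 1) (hn : 2 * p ≤ n)
    (hspan : ∀ S : Finset (Fin n), (n : ℝ) / 2 ≤ (S.card : ℝ) →
      Submodule.span ℝ (x '' ↑S) = ⊤) :
    ∃ α > 0, ∀ u v : Fin p → ℝ, u ⬝ᵥ u = 1 → v ⬝ᵥ v = 1 →
      α ≤ (1 / (n : ℝ)) * ∑ i, (u ⬝ᵥ x i) ^ 2 * (v ⬝ᵥ x i) ^ 2 := by
  rcases Nat.eq_zero_or_pos p with hp | hp
  · refine ⟨1, one_pos, fun u v hu hv => ?_⟩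
    exfalso
    subst hp
    simp [dotProduct] at hu
  have hn0 : 0 < n := lt_of_lt_of_le (by omega) hn
  set f : (Fin p → ℝ) × (Fin p → ℝ) → ℝ :=
    fun z => ∑ i, (z.1 ⬝ᵥ x i) ^ 2 * (z.2 ⬝ᵥ x i) ^ 2 with hf
  set K : Set ((Fin p → ℝ) × (Fin p → ℝ)) :=
    {z | z.1 ⬝ᵥ z.1 = 1 ∧ z.2 ⬝ᵥ z.2 = 1} with hK
  have hcont_dot : ∀ (w : Fin p → ℝ), Continuous fun u : Fin p → ℝ => u ⬝ᵥ w := by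
    intro w
    unfold dotProduct
    exact continuous_finset_sum _ fun j _ => (continuous_apply j).mul continuous_const
  have hcont_self : Continuous fun u : Fin p → ℝ => u ⬝ᵥ u := by
    unfold dotProduct
    exact continuous_finset_sum _ fun j _ => (continuous_apply j).mul (continuous_apply j)
  have hfc : Continuous f := by
    apply continuous_finset_sum
    intro i _
    exact (((hcont_dot (x i)).comp continuous_fst).pow 2).mul
      (((hcont_dot (x i)).comp continuous_snd).pow 2)
  -- each component of a unit vector is small
  have habs : ∀ u : Fin p → ℝ, u ⬝ᵥ u = 1 → ∀ j, ‖u j‖ ≤ 1 := by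
    intro u hu j
    rw [Real.norm_eq_abs]
    have h1 : u j * u j ≤ ∑ k, u k * u k := by
      apply Finset.single_le_sum (f := fun k => u k * u k)
        (fun k _ => mul_self_nonneg _) (Finset.mem_univ j)
    rw [show ∑ k, u k * u k = u ⬝ᵥ u from rfl, hu] at h1
    exact abs_le_one_iff_mul_self_le_one.mpr h1
  have hKc : IsCompact K := by
    apply Metric.isCompact_of_isClosed_isBounded
    · exact (isClosed_eq (hcont_self.comp continuous_fst) continuous_const).inter
        (isClosed_eq (hcont_self.comp continuous_snd) continuous_const)
    · rw [Metric.isBounded_iff_subset_closedBall 0]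
      refine ⟨1, fun z hz => ?_⟩
      rw [Metric.mem_closedBall, dist_zero_right, Prod.norm_def]
      apply max_le
      · exact (pi_norm_le_iff_of_nonneg zero_le_one).mpr (habs z.1 hz.1)
      · exact (pi_norm_le_iff_of_nonneg zero_le_one).mpr (habs z.2 hz.2)
  -- K is nonempty
  have hKne : K.Nonempty := by
    refine ⟨(Pi.single ⟨0, hp⟩ 1, Pi.single ⟨0, hp⟩ 1), ?_, ?_⟩ <;>
    · show Pi.single (⟨0, hp⟩ : Fin p) (1:ℝ) ⬝ᵥ Pi.single ⟨0, hp⟩ 1 = 1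
      simp [dotProduct, Pi.single_apply]
  obtain ⟨z₀, hz₀K, hmin⟩ := hKc.exists_isMinOn hKne hfc.continuousOn
  -- f z₀ > 0
  have hfnonneg : ∀ z, 0 ≤ f z := by
    intro z
    exact Finset.sum_nonneg fun i _ => mul_nonneg (sq_nonneg _) (sq_nonneg _)
  have hfpos : 0 < f z₀ := by
    rcases lt_or_eq_of_le (hfnonneg z₀) with h | h
    · exact h
    exfalso
    have hterms : ∀ i ∈ Finset.univ, (z₀.1 ⬝ᵥ x i) ^ 2 * (z₀.2 ⬝ᵥ x i) ^ 2 = 0 := by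
      rw [← Finset.sum_eq_zero_iff_of_nonneg
        (fun i _ => mul_nonneg (sq_nonneg _) (sq_nonneg _))]
      exact h.symm
    set S : Finset (Fin n) := Finset.univ.filter (fun i => z₀.1 ⬝ᵥ x i = 0) with hS
    set T : Finset (Fin n) := Finset.univ.filter (fun i => z₀.2 ⬝ᵥ x i = 0) with hT
    have hunion : S ∪ T = Finset.univ := by
      apply Finset.eq_univ_of_forall
      intro i
      have := hterms i (Finset.mem_univ i)
      rcases mul_eq_zero.mp this with h' | h'
      · exact Finset.mem_union_left _ (Finset.mem_filter.mpr ⟨Finset.mem_univ i,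
          pow_eq_zero_iff (by norm_num) |>.mp h'⟩)
      · exact Finset.mem_union_right _ (Finset.mem_filter.mpr ⟨Finset.mem_univ i,
          pow_eq_zero_iff (by norm_num) |>.mp h'⟩)
    have hcard : n ≤ S.card + T.card := by
      have := Finset.card_union_le S T
      rw [hunion, Finset.card_univ, Fintype.card_fin] at this
      omega
    -- one of S, T has card ≥ n/2; get contradiction from orthogonality
    have key : ∀ (u : Fin p → ℝ) (W : Finset (Fin n)), u ⬝ᵥ u = 1 →
        (∀ i ∈ W, u ⬝ᵥ x i = 0) → (n : ℝ) / 2 ≤ (W.card : ℝ) → False := by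
      intro u W hu horth hWcard
      have hspanW := hspan W hWcard
      have humem : u ∈ Submodule.span ℝ (x '' ↑W) := by
        rw [hspanW]; exact Submodule.mem_top
      have : u ⬝ᵥ u = 0 := by
        refine Submodule.span_induction (p := fun w _ => u ⬝ᵥ w = 0) ?_ ?_ ?_ ?_ humem
        · rintro w ⟨i, hi, rfl⟩
          exact horth i hi
        · exact dotProduct_zero u
        · intro a b _ _ ha hb
          rw [dotProduct_add, ha, hb, add_zero]
        · intro c a _ ha
          rw [dotProduct_smul, ha, smul_zero]
      rw [this] at hu
      exact one_ne_zero hu.symm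
    rcases le_or_gt n (2 * S.card) with hc | hc
    · refine key z₀.1 S hz₀K.1 (fun i hi => (Finset.mem_filter.mp hi).2) ?_
      rw [div_le_iff₀ (by norm_num)]
      push_cast
      have := (Nat.cast_le (α := ℝ)).mpr hc
      push_cast at this
      linarith
    · refine key z₀.2 T hz₀K.2 (fun i hi => (Finset.mem_filter.mp hi).2) ?_
      have hc' : n ≤ 2 * T.card := by omega
      rw [div_le_iff₀ (by norm_num)]
      push_cast
      have := (Nat.cast_le (α := ℝ)).mpr hc'
      push_cast at this
      linarith
  refine ⟨(1 / (n : ℝ)) * f z₀, ?_, ?_⟩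
  · apply mul_pos _ hfpos
    have : (0:ℝ) < n := by exact_mod_cast hn0
    positivity
  · intro u v hu hv
    have hmem : (u, v) ∈ K := ⟨hu, hv⟩
    have := hmin hmem
    have hle : f z₀ ≤ f (u, v) := this
    have h1n : (0:ℝ) ≤ 1 / (n : ℝ) := by positivity
    calc (1 / (n : ℝ)) * f z₀ ≤ (1 / (n : ℝ)) * f (u, v) :=
          mul_le_mul_of_nonneg_left hle h1n
      _ = (1 / (n : ℝ)) * ∑ i, (u ⬝ᵥ x i) ^ 2 * (v ⬝ᵥ x i) ^ 2 := rfl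
end
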